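/- arXiv:math/0309409 — 2 statements merged into one kernel-verified Lean document; each statement's English description precedes it below -/
import Mathlib

section
/- Let I = ⟨z_1,…,z_m⟩ be a radical monomial ideal (z_i squarefree monomials) in S = C[x_1,…,x_r], and let B_α be the ideal generated by the products Π_{π̃(ρ_j) ∉ σ} x_j over all maximal cones σ of Σ_α. Then the irreducible components of V(B_α) ⊆ C^r are exactly the coordinate subspaces V(x_{j_1},…,x_{j_s}) for the collections {ρ_{j_1},…,ρ_{j_s}} of rays of Σ that are primitive with respect to Σ_α. -/
/-!
STATEMENT 15: Let `I = ⟨z_1,…,z_m⟩` be a radical monomial ideal and `B_α` the ideal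
generated by the products `Π_{π̃(ρ_j) ∉ σ} x_j` over the maximal cones `σ` of the fan
`S_α` of a semiample class `α` (with map of fans `π̃ : S → S_α` induced by a quotient
`A : N_ℝ → N_ℝ/L`).  Then the irreducible components of `V(B_α) ⊆ ℂ^r` are exactly
the coordinate subspaces `V(x_{j_1},…,x_{j_s})` for the collections
`{ρ_{j_1},…,ρ_{j_s}}` of rays of `S` that are primitive with respect to `S_α`.

"Exactly the irreducible components" is expressed by: `V(B_α)` is the union of these
(irreducible) coordinate subspaces, and they form an antichain (none is contained in
another), so they are the maximal irreducible closed subsets of `V(B_α)`. -/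

/-- Cones of `S` recorded by the index sets of their rays. -/
def coneOf {n r : ℕ} (v : Fin r → Fin n → ℝ) (s : Finset (Fin r)) :
    Set (Fin n → ℝ) :=
  {x | ∃ t : Fin r → ℝ, (∀ j, 0 ≤ t j) ∧ (∀ j ∉ s, t j = 0) ∧ x = ∑ j, t j • v j}

/-- The fan `S_α` in the quotient space `ℝ^{n'} = N_ℝ/L`, as a finite collection of
convex cones. -/
structure QuotFan (n' : ℕ) where
  cones : Set (Set (Fin n' → ℝ))
  finite : cones.Finite
  nonempty : ∀ σ ∈ cones, (σ : Set (Fin n' → ℝ)).Nonempty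
  convex : ∀ σ ∈ cones, Convex ℝ σ
  isCone : ∀ σ ∈ cones, ∀ x ∈ σ, ∀ t : ℝ, 0 ≤ t → t • x ∈ σ

/-- Maximal cones of `S_α`. -/
def QuotFan.IsMaxCone {n' : ℕ} (Sα : QuotFan n') (σ : Set (Fin n' → ℝ)) : Prop :=
  σ ∈ Sα.cones ∧ ∀ τ ∈ Sα.cones, σ ⊆ τ → σ = τ

/-- A collection of rays of `S` is primitive with respect to `S_α`: the image under
`π̃` of the whole collection lies in no cone of `S_α`, but the image of every proper
subset lies in some cone. -/
def IsPrimitive {n n' r : ℕ} (v : Fin r → Fin n → ℝ)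
    (A : (Fin n → ℝ) →ₗ[ℝ] (Fin n' → ℝ)) (Sα : QuotFan n')
    (s : Finset (Fin r)) : Prop :=
  (¬ ∃ σ ∈ Sα.cones, ∀ j ∈ s, A (v j) ∈ σ) ∧
    ∀ t ⊂ s, ∃ σ ∈ Sα.cones, ∀ j ∈ t, A (v j) ∈ σ

/-- The vanishing locus of `B_α` in `ℂ^r`: points killing, for every maximal cone `σ`
of `S_α`, the monomial `Π_{π̃(ρ_j) ∉ σ} x_j`. -/
def VBalpha {n n' r : ℕ} (v : Fin r → Fin n → ℝ)
    (A : (Fin n → ℝ) →ₗ[ℝ] (Fin n' → ℝ)) (Sα : QuotFan n') : Set (Fin r → ℂ) :=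
  {x | ∀ σ, Sα.IsMaxCone σ → ∃ j, A (v j) ∉ σ ∧ x j = 0}

/-- The coordinate subspace `V(x_{j_1},…,x_{j_s})`. -/
def coordSubspace {r : ℕ} (s : Finset (Fin r)) : Set (Fin r → ℂ) :=
  {x | ∀ j ∈ s, x j = 0}

def LiesInCone {n n' r : ℕ} (v : Fin r → Fin n → ℝ)
    (A : (Fin n → ℝ) →ₗ[ℝ] (Fin n' → ℝ)) (Sα : QuotFan n') (s : Finset (Fin r)) : Prop :=
  ∃ σ ∈ Sα.cones, ∀ j ∈ s, A (v j) ∈ σ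

noncomputable def zeroSet {r : ℕ} (x : Fin r → ℂ) : Finset (Fin r) :=
  Finset.univ.filter (x · = 0)

lemma QuotFan.exists_isMaxCone_superset {n' : ℕ} (Sα : QuotFan n') {σ : Set (Fin n' → ℝ)}
    (hσ : σ ∈ Sα.cones) : ∃ τ, Sα.IsMaxCone τ ∧ σ ⊆ τ := by
  obtain ⟨τ, hστ, hτ, hmax⟩ := Sα.finite.exists_le_maximal hσ
  exact ⟨τ, ⟨hτ, fun υ hυ hτυ => hτυ.antisymm (hmax hυ hτυ)⟩, hστ⟩

section Primitive

variable {n n' r : ℕ} (v : Fin r → Fin n → ℝ) (A : (Fin n → ℝ) →ₗ[ℝ] (Fin n' → ℝ))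
  (Sα : QuotFan n')

lemma LiesInCone.mono {s t : Finset (Fin r)} (ht : LiesInCone v A Sα t) (hst : s ⊆ t) :
    LiesInCone v A Sα s :=
  let ⟨σ, hσ, hσt⟩ := ht
  ⟨σ, hσ, fun j hj => hσt j (hst hj)⟩

lemma isPrimitive_iff_minimal (s : Finset (Fin r)) :
    IsPrimitive v A Sα s ↔ Minimal (fun t => ¬ LiesInCone v A Sα t) s := by
  refine ⟨fun ⟨hs, hsub⟩ => ⟨hs, fun t ht hts => ?_⟩,
    fun hs => ⟨hs.1, fun t hts => by_contra fun ht => hts.not_ge (hs.2 ht hts.subset)⟩⟩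
  by_contra hst
  exact ht (hsub t (hts.ssubset_of_not_subset hst))

lemma not_liesInCone_iff_exists_isPrimitive_subset (s : Finset (Fin r)) :
    ¬ LiesInCone v A Sα s ↔ ∃ t ⊆ s, IsPrimitive v A Sα t := by
  simp only [isPrimitive_iff_minimal]
  refine ⟨exists_minimal_le_of_wellFoundedLT (fun t => ¬ LiesInCone v A Sα t) s, ?_⟩
  rintro ⟨t, hts, ht⟩ hs
  exact ht.1 (hs.mono v A Sα hts)

lemma IsPrimitive.eq_of_subset {s t : Finset (Fin r)} (hs : IsPrimitive v A Sα s)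
    (ht : IsPrimitive v A Sα t) (hts : t ⊆ s) : t = s :=
  ((isPrimitive_iff_minimal v A Sα s).1 hs).eq_of_le ht.1 hts

lemma mem_VBalpha_iff (x : Fin r → ℂ) :
    x ∈ VBalpha v A Sα ↔ ¬ LiesInCone v A Sα (zeroSet x) := by
  constructor
  · rintro hx ⟨σ, hσ, hZσ⟩
    obtain ⟨τ, hτ, hστ⟩ := Sα.exists_isMaxCone_superset hσ
    obtain ⟨j, hjτ, hj⟩ := hx τ hτ
    exact hjτ (hστ (hZσ j (by simp [zeroSet, hj])))
  · intro hZ σ hσ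
    by_contra! h
    refine hZ ⟨σ, hσ.1, fun j hj => by_contra fun hjσ => h j hjσ ?_⟩
    simpa [zeroSet] using hj

end Primitive

lemma mem_coordSubspace_iff {r : ℕ} (s : Finset (Fin r)) (x : Fin r → ℂ) :
    x ∈ coordSubspace s ↔ s ⊆ zeroSet x := by
  simp [coordSubspace, zeroSet, Finset.subset_iff]

lemma coordSubspace_subset_iff {r : ℕ} (s t : Finset (Fin r)) :
    coordSubspace s ⊆ coordSubspace t ↔ t ⊆ s := by
  refine ⟨fun hst j hj => by_contra fun hjs => ?_, fun hts x hx j hj => hx j (hts hj)⟩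
  have hx : (fun i => if i ∈ s then (0 : ℂ) else 1) ∈ coordSubspace s :=
    fun i hi => if_pos hi
  simpa [hjs] using hst hx j hj

theorem irreducible_components_of_VBalpha_general
    {n n' r : ℕ} (v : Fin r → Fin n → ℝ)
    (A : (Fin n → ℝ) →ₗ[ℝ] (Fin n' → ℝ)) (Sα : QuotFan n') :
    VBalpha v A Sα = (⋃ s ∈ {s | IsPrimitive v A Sα s}, coordSubspace s) ∧
      ∀ s t : Finset (Fin r), IsPrimitive v A Sα s → IsPrimitive v A Sα t →
        s ≠ t → ¬ (coordSubspace s ⊆ coordSubspace t) := by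
  refine ⟨?_, fun s t hs ht hne hst => ?_⟩
  · ext x
    simp only [mem_VBalpha_iff, not_liesInCone_iff_exists_isPrimitive_subset, Set.mem_iUnion,
      Set.mem_ofPred_eq, mem_coordSubspace_iff, exists_prop, and_comm]
  · rw [coordSubspace_subset_iff] at hst
    exact hne (hs.eq_of_subset v A Sα ht hst).symm

theorem irreducible_components_of_VBalpha
    {n n' r : ℕ} (v : Fin r → Fin n → ℝ) (cones : Finset (Finset (Fin r)))
    (A : (Fin n → ℝ) →ₗ[ℝ] (Fin n' → ℝ)) (Sα : QuotFan n')
    -- `π̃ : S → S_α` is a map of fans: each cone of `S` maps into a cone of `S_α`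
    (hmap : ∀ s ∈ cones, ∃ σ ∈ Sα.cones, ∀ x ∈ coneOf v s, A x ∈ σ)
    -- the rays of `S` are among its cones
    (hrays : ∀ j : Fin r, {j} ∈ cones) :
    VBalpha v A Sα = (⋃ s ∈ {s | IsPrimitive v A Sα s}, coordSubspace s) ∧
      ∀ s t : Finset (Fin r), IsPrimitive v A Sα s → IsPrimitive v A Sα t →
        s ≠ t → ¬ (coordSubspace s ⊆ coordSubspace t) :=
  irreducible_components_of_VBalpha_general v A Sα
end

section
/- With notation as above, B_α ⊆ I if and only if no maximal cone of Σ_α contains the π̃-images of rays of Σ of all m colors (where ray ρ_j has color i iff x_j | z_i). -/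
open scoped Classical in
/-- The ideal `B_α ⊆ ℂ[x_1,…,x_r]`, generated by `Π_{π̃(ρ_j) ∉ σ} x_j` over the
maximal cones `σ` of `S_α`. -/
noncomputable def Balpha {n n' r : ℕ} (v : Fin r → Fin n → ℝ)
    (A : (Fin n → ℝ) →ₗ[ℝ] (Fin n' → ℝ)) (Sα : QuotFan n') :
    Ideal (MvPolynomial (Fin r) ℂ) :=
  Ideal.span {p | ∃ σ, Sα.IsMaxCone σ ∧
    p = ∏ j ∈ Finset.univ.filter (fun j => A (v j) ∉ σ), MvPolynomial.X j}

/-- The radical monomial ideal `I = ⟨z_1,…,z_m⟩` generated by the squarefree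
monomials with supports `z i`. -/
noncomputable def monomialIdeal {r m : ℕ} (z : Fin m → Finset (Fin r)) :
    Ideal (MvPolynomial (Fin r) ℂ) :=
  Ideal.span {p | ∃ i : Fin m, p = ∏ j ∈ z i, MvPolynomial.X j}


open MvPolynomial

noncomputable def ind {r : ℕ} (s : Finset (Fin r)) : Fin r →₀ ℕ :=
  ∑ j ∈ s, Finsupp.single j 1

lemma ind_apply {r : ℕ} (s : Finset (Fin r)) (k : Fin r) :
    ind s k = if k ∈ s then 1 else 0 := by
  classical
  simp [ind, Finsupp.finset_sum_apply, Finsupp.single_apply]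

lemma ind_le_ind_iff {r : ℕ} (s t : Finset (Fin r)) : ind s ≤ ind t ↔ s ⊆ t := by
  classical
  constructor
  · intro h j hj
    have := h j
    rw [ind_apply, ind_apply, if_pos hj] at this
    by_contra hjt
    rw [if_neg hjt] at this
    omega
  · intro hst j
    rw [ind_apply, ind_apply]
    by_cases hj : j ∈ s
    · rw [if_pos hj, if_pos (hst hj)]
    · simp [hj]

lemma prod_X_eq {r : ℕ} (s : Finset (Fin r)) :
    (∏ j ∈ s, (X j : MvPolynomial (Fin r) ℂ)) = monomial (ind s) 1 := by
  classical
  induction s using Finset.induction with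
  | empty => simp [ind]
  | @insert a s h ih =>
      have hins : ind (insert a s) = Finsupp.single a 1 + ind s := by
        rw [ind, Finset.sum_insert h]; rfl
      rw [Finset.prod_insert h, ih, hins, monomial_single_add, pow_one]

lemma mem_monomialIdeal_iff {r m : ℕ} (z : Fin m → Finset (Fin r)) (s : Finset (Fin r)) :
    (∏ j ∈ s, (X j : MvPolynomial (Fin r) ℂ)) ∈ monomialIdeal z ↔ ∃ i, z i ⊆ s := by
  classical
  have hset : {p : MvPolynomial (Fin r) ℂ | ∃ i : Fin m, p = ∏ j ∈ z i, X j}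
      = (fun d => monomial d (1 : ℂ)) '' (Set.range fun i => ind (z i)) := by
    ext p
    simp only [Set.mem_setOf_eq, Set.mem_image, Set.mem_range]
    constructor
    · rintro ⟨i, rfl⟩; exact ⟨ind (z i), ⟨i, rfl⟩, (prod_X_eq (z i)).symm⟩
    · rintro ⟨d, ⟨i, rfl⟩, rfl⟩; exact ⟨i, (prod_X_eq (z i)).symm⟩
  rw [monomialIdeal, hset, prod_X_eq, mem_ideal_span_monomial_image]
  rw [support_monomial, if_neg one_ne_zero]
  simp only [Finset.mem_singleton]
  constructor
  · intro h
    obtain ⟨d, ⟨i, rfl⟩, hd⟩ := h (ind s) rfl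
    exact ⟨i, (ind_le_ind_iff _ _).1 hd⟩
  · rintro ⟨i, hi⟩ xi hxi
    subst hxi
    exact ⟨ind (z i), ⟨i, rfl⟩, (ind_le_ind_iff _ _).2 hi⟩

theorem Balpha_subset_iff_no_fully_colored_cone
    {n n' r m : ℕ} (v : Fin r → Fin n → ℝ) (cones : Finset (Finset (Fin r)))
    (A : (Fin n → ℝ) →ₗ[ℝ] (Fin n' → ℝ)) (Sα : QuotFan n')
    -- `π̃ : S → S_α` is a map of fans
    (hmap : ∀ s ∈ cones, ∃ σ ∈ Sα.cones, ∀ x ∈ coneOf v s, A x ∈ σ)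
    (hrays : ∀ j : Fin r, {j} ∈ cones)
    (z : Fin m → Finset (Fin r)) :
    Balpha v A Sα ≤ monomialIdeal z ↔
      ¬ ∃ σ, Sα.IsMaxCone σ ∧ ∀ i : Fin m, ∃ j ∈ z i, A (v j) ∈ σ := by
  classical
  rw [Balpha, Ideal.span_le]
  constructor
  · rintro hle ⟨σ, hσ, hful⟩
    have hp : (∏ j ∈ Finset.univ.filter (fun j => A (v j) ∉ σ), (MvPolynomial.X j : MvPolynomial (Fin r) ℂ)) ∈ monomialIdeal z :=
      hle ⟨σ, hσ, rfl⟩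
    obtain ⟨i, hi⟩ := (mem_monomialIdeal_iff z _).1 hp
    obtain ⟨j, hjz, hjσ⟩ := hful i
    exact (Finset.mem_filter.1 (hi hjz)).2 hjσ
  · intro h p hp
    obtain ⟨σ, hσ, rfl⟩ := hp
    push_neg at h
    obtain ⟨i, hi⟩ := h σ hσ
    refine (mem_monomialIdeal_iff z _).2 ⟨i, fun j hj => ?_⟩
    exact Finset.mem_filter.2 ⟨Finset.mem_univ j, hi j hj⟩
end
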